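/- arXiv:1812.09255 — 8 statements merged into one kernel-verified Lean document; each statement's English description precedes it below -/
import Mathlib

section
/- (Key Lemma) Let r_0 be an index such that E_Stop(r) > Ē_Keep(r) for every r with r_0 < r ≤ n. Then E_Stop(r) > E_Keep(r) for every r with r_0 < r ≤ n. -/
/-!
Ē_Keep satisfies the same backward recursion as E_Keep, except that the optimal choice
`max (E_Stop (k+1)) (E_Keep (k+1))` is replaced by `E_Stop (k+1)`. Going down from `n`, where both
vanish, `E_Keep (r+1) = Ē_Keep (r+1) < E_Stop (r+1)` makes the maximum equal to `E_Stop (r+1)`,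
so the two recursions agree at `r` as well; hence `E_Keep = Ē_Keep < E_Stop` on `(r₀, n]`.
-/

open Finset

theorem sum_Icc_prod_Icc_pred_mul_eq {R : Type*} [CommSemiring R] (q a : ℕ → R) {k n : ℕ}
    (hk : k < n) :
    ∑ i ∈ Icc (k + 1) n, (∏ j ∈ Icc (k + 1) (i - 1), q j) * a i =
      a (k + 1) + q (k + 1) * ∑ i ∈ Icc (k + 1 + 1) n, (∏ j ∈ Icc (k + 1 + 1) (i - 1), q j) * a i := by
  rw [← insert_Icc_add_one_left_eq_Icc (by omega : k + 1 ≤ n), sum_insert (by simp),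
    Nat.add_sub_cancel, Icc_eq_empty (by omega), prod_empty, one_mul, mul_sum]
  refine congrArg _ (sum_congr rfl fun i hi => ?_)
  have hki : k + 1 ≤ i - 1 := by simp only [mem_Icc] at hi; omega
  rw [← insert_Icc_add_one_left_eq_Icc hki, prod_insert (by simp)]
  ring

theorem eq_of_max_recursion_of_le {R : Type*} [Ring R] [LinearOrder R] (n r₀ : ℕ)
    (p S K B : ℕ → R) (hKB : K n = B n)
    (hK : ∀ k < n, K k = p (k + 1) * max (S (k + 1)) (K (k + 1)) + (1 - p (k + 1)) * K (k + 1))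
    (hB : ∀ k < n, B k = p (k + 1) * S (k + 1) + (1 - p (k + 1)) * B (k + 1))
    (hBS : ∀ r, r₀ < r → r ≤ n → B r ≤ S r) :
    ∀ r, r₀ < r → r ≤ n → K r = B r := by
  intro r hr hrn
  induction hrn using Nat.decreasingInduction with
  | self => exact hKB
  | of_succ k hk ih =>
    have hK_eq : K (k + 1) = B (k + 1) := ih (by omega)
    have hmax : max (S (k + 1)) (K (k + 1)) = S (k + 1) :=
      max_eq_left (hK_eq ▸ hBS (k + 1) (by omega) hk)
    rw [hK k hk, hB k hk, hmax, hK_eq]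

theorem stmt3_general (n : ℕ) (p : ℕ → ℝ)
    (ES EK EB : ℕ → ℝ)
    (hEKn : EK n = 0)
    (hEK : ∀ k < n, EK k = p (k+1) * max (ES (k+1)) (EK (k+1))
        + (1 - p (k+1)) * EK (k+1))
    (hEB : ∀ k, EB k = ∑ i ∈ Icc (k+1) n,
        (∏ j ∈ Icc (k+1) (i-1), (1 - p j)) * p i * ES i)
    (r0 : ℕ)
    (hr0 : ∀ r, r0 < r → r ≤ n → ES r > EB r) :
    ∀ r, r0 < r → r ≤ n → ES r > EK r := by
  have hEBn : EB n = 0 := by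
    rw [hEB, Icc_eq_empty (by omega), sum_empty]
  have hEB_rec : ∀ k < n, EB k = p (k + 1) * ES (k + 1) + (1 - p (k + 1)) * EB (k + 1) := by
    intro k hk
    simp_rw [hEB, mul_assoc _ (p _)]
    exact sum_Icc_prod_Icc_pred_mul_eq (fun j => 1 - p j) (fun i => p i * ES i) hk
  intro r hr hrn
  rw [eq_of_max_recursion_of_le n r0 p ES EK EB (hEKn.trans hEBn.symm) hEK hEB_rec
    (fun r hr hrn => (hr0 r hr hrn).le) r hr hrn]
  exact hr0 r hr hrn

theorem stmt3 (n : ℕ) (hn : 1 ≤ n) (p w : ℕ → ℝ)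
    (hp : ∀ i ∈ Icc 1 n, 0 ≤ p i ∧ p i ≤ 1)
    (hw : ∀ i ∈ Icc 1 n, 0 < w i)
    (ES EK EB : ℕ → ℝ)
    (hES : ∀ k, ES k = w k * ∏ i ∈ Icc (k+1) n, (1 - p i))
    (hEKn : EK n = 0)
    (hEK : ∀ k < n, EK k = p (k+1) * max (ES (k+1)) (EK (k+1))
        + (1 - p (k+1)) * EK (k+1))
    (hEB : ∀ k, EB k = ∑ i ∈ Icc (k+1) n,
        (∏ j ∈ Icc (k+1) (i-1), (1 - p j)) * p i * ES i)
    (r0 : ℕ)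
    (hr0 : ∀ r, r0 < r → r ≤ n → ES r > EB r) :
    ∀ r, r0 < r → r ≤ n → ES r > EK r :=
  stmt3_general n p ES EK EB hEKn hEK hEB r0 hr0
end

section
/- If w_{k+1} ≥ (1 - p_{k+1}) · w_k for all 1 ≤ k ≤ n-1, then the stopping set Υ := {k ∈ {1,...,n} : E_Stop(k) > E_Keep(k)} is upward closed: if k ∈ Υ and k < n then k+1 ∈ Υ. (Hence the problem is monotone, i.e., the optimal strategy is a threshold strategy.) -/
/-! If stopping is not optimal at `k + 1`, then keeping at `k` is worth exactly `E_Keep(k+1)`,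
while the monotonicity condition makes stopping at `k` worth at most stopping at `k + 1`;
so stopping at `k` cannot be strictly optimal either. -/

open Finset

lemma mul_prod_Icc_one_sub_le {n k : ℕ} {p w : ℕ → ℝ} (hk : k + 1 ≤ n)
    (hp : ∀ i ∈ Icc (k + 2) n, p i ≤ 1) (hw : (1 - p (k + 1)) * w k ≤ w (k + 1)) :
    w k * ∏ i ∈ Icc (k + 1) n, (1 - p i) ≤ w (k + 1) * ∏ i ∈ Icc (k + 2) n, (1 - p i) := by
  have htail : 0 ≤ ∏ i ∈ Icc (k + 2) n, (1 - p i) :=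
    prod_nonneg fun i hi => sub_nonneg.2 (hp i hi)
  rw [← mul_prod_Ioc_eq_prod_Icc hk, ← Icc_add_one_left_eq_Ioc, ← mul_assoc, mul_comm (w k)]
  exact mul_le_mul_of_nonneg_right hw htail

theorem stmt4_general (n : ℕ) (p w : ℕ → ℝ)
    (hp : ∀ i ∈ Icc 1 n, 0 ≤ p i ∧ p i ≤ 1)
    (ES EK : ℕ → ℝ)
    (hES : ∀ k, ES k = w k * ∏ i ∈ Icc (k+1) n, (1 - p i))
    (hEK : ∀ k < n, EK k = p (k+1) * max (ES (k+1)) (EK (k+1))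
        + (1 - p (k+1)) * EK (k+1))
    (hmono : ∀ k, 1 ≤ k → k + 1 ≤ n → w (k+1) ≥ (1 - p (k+1)) * w k) :
    ∀ k ∈ Icc 1 n, ES k > EK k → k < n → ES (k+1) > EK (k+1) := by
  intro k hk hstop hkn
  by_contra! hkeep
  have hk1 : 1 ≤ k := (mem_Icc.1 hk).1
  have hEK_eq : EK k = EK (k + 1) := by
    rw [hEK k hkn, max_eq_right hkeep]
    ring
  have hES_le : ES k ≤ ES (k + 1) := by
    rw [hES, hES]
    refine mul_prod_Icc_one_sub_le hkn (fun i hi => (hp i ?_).2) (hmono k hk1 hkn)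
    exact Icc_subset_Icc (by omega) le_rfl hi
  linarith

theorem stmt4 (n : ℕ) (hn : 1 ≤ n) (p w : ℕ → ℝ)
    (hp : ∀ i ∈ Icc 1 n, 0 ≤ p i ∧ p i ≤ 1)
    (hw : ∀ i ∈ Icc 1 n, 0 < w i)
    (ES EK : ℕ → ℝ)
    (hES : ∀ k, ES k = w k * ∏ i ∈ Icc (k+1) n, (1 - p i))
    (hEKn : EK n = 0)
    (hEK : ∀ k < n, EK k = p (k+1) * max (ES (k+1)) (EK (k+1))
        + (1 - p (k+1)) * EK (k+1))
    (hmono : ∀ k, 1 ≤ k → k + 1 ≤ n → w (k+1) ≥ (1 - p (k+1)) * w k) :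
    ∀ k ∈ Icc 1 n, ES k > EK k → k < n → ES (k+1) > EK (k+1) :=
  stmt4_general n p w hp ES EK hES hEK hmono
end

section
/- Suppose that for all 0 < r < n the implication E_Stop(r) > Ē_Keep(r) ⟹ E_Stop(r+1) > Ē_Keep(r+1) holds. Then the stopping set Υ := {k : E_Stop(k) > E_Keep(k)} is upward closed in {1,...,n}, i.e., the problem is monotone. -/
/-!
The one-step look-ahead value `Ē_Keep(k)` (keep now, stop at the next success) satisfies the same
backward recursion as `E_Keep(k)`, except that `max (E_Stop) (E_Keep)` is replaced by `E_Stop`.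
Hence `Ē_Keep ≤ E_Keep` everywhere, so `k ∈ Υ` gives `E_Stop(k) > Ē_Keep(k)`, and the
hypothesis propagates this to every `r > k`. Once stopping beats `Ē_Keep` at every later index,
the two recursions coincide from there on, so `E_Keep(k+1) = Ē_Keep(k+1) < E_Stop(k+1)`.
-/

open Finset

noncomputable def nextSuccessValue (p f : ℕ → ℝ) (n k : ℕ) : ℝ :=
  ∑ i ∈ Icc (k + 1) n, (∏ j ∈ Icc (k + 1) (i - 1), (1 - p j)) * p i * f i

theorem nextSuccessValue_self (p f : ℕ → ℝ) (n : ℕ) : nextSuccessValue p f n n = 0 := by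
  simp [nextSuccessValue]

theorem nextSuccessValue_of_lt (p f : ℕ → ℝ) {n k : ℕ} (hk : k < n) :
    nextSuccessValue p f n k =
      p (k + 1) * f (k + 1) + (1 - p (k + 1)) * nextSuccessValue p f n (k + 1) := by
  have hIcc : ∀ m, k + 1 ≤ m → Icc (k + 1) m = insert (k + 1) (Icc (k + 2) m) := by
    intro m hm
    ext x; simp only [mem_Icc, mem_insert]; omega
  have hterm : ∀ i ∈ Icc (k + 2) n, (∏ j ∈ Icc (k + 1) (i - 1), (1 - p j)) * p i * f i
      = (1 - p (k + 1)) * ((∏ j ∈ Icc (k + 2) (i - 1), (1 - p j)) * p i * f i) := by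
    intro i hi
    rw [mem_Icc] at hi
    rw [hIcc (i - 1) (by omega), prod_insert (by simp)]
    ring
  rw [nextSuccessValue, nextSuccessValue, hIcc n hk, sum_insert (by simp), sum_congr rfl hterm,
    ← mul_sum, Icc_eq_empty (by omega), prod_empty, one_mul]

section KeepRecursion

variable {n : ℕ} {p S K : ℕ → ℝ}

theorem nextSuccessValue_le (hp : ∀ i ∈ Icc 1 n, 0 ≤ p i ∧ p i ≤ 1) (hKn : K n = 0)
    (hK : ∀ k < n, K k = p (k + 1) * max (S (k + 1)) (K (k + 1)) + (1 - p (k + 1)) * K (k + 1))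
    {k : ℕ} (hkn : k ≤ n) : nextSuccessValue p S n k ≤ K k := by
  induction hkn using Nat.decreasingInduction with
  | self => rw [nextSuccessValue_self, hKn]
  | of_succ k hk ih =>
    obtain ⟨hp0, hp1⟩ := hp (k + 1) (by simp only [mem_Icc]; omega)
    rw [nextSuccessValue_of_lt p S hk, hK k hk]
    have hmax := le_max_left (S (k + 1)) (K (k + 1))
    nlinarith

theorem eq_nextSuccessValue_of_forall_le (hKn : K n = 0)
    (hK : ∀ k < n, K k = p (k + 1) * max (S (k + 1)) (K (k + 1)) + (1 - p (k + 1)) * K (k + 1))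
    {k : ℕ} (hkn : k ≤ n) (hstop : ∀ r, k < r → r ≤ n → nextSuccessValue p S n r ≤ S r) :
    K k = nextSuccessValue p S n k := by
  induction hkn using Nat.decreasingInduction with
  | self => rw [nextSuccessValue_self, hKn]
  | of_succ k hk ih =>
    have hKB := ih fun r hr => hstop r (by omega)
    rw [hK k hk, nextSuccessValue_of_lt p S hk, ← hKB,
      max_eq_left (hKB ▸ hstop (k + 1) k.lt_succ_self hk)]

end KeepRecursion

theorem stmt5_general (n : ℕ) (p : ℕ → ℝ)
    (hp : ∀ i ∈ Icc 1 n, 0 ≤ p i ∧ p i ≤ 1)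
    (ES EK EB : ℕ → ℝ)
    (hEKn : EK n = 0)
    (hEK : ∀ k < n, EK k = p (k+1) * max (ES (k+1)) (EK (k+1))
        + (1 - p (k+1)) * EK (k+1))
    (hEB : ∀ k, EB k = ∑ i ∈ Icc (k+1) n,
        (∏ j ∈ Icc (k+1) (i-1), (1 - p j)) * p i * ES i)
    (hyp : ∀ r, 0 < r → r < n → (ES r > EB r → ES (r+1) > EB (r+1))) :
    ∀ k ∈ Icc 1 n, ES k > EK k → k < n → ES (k+1) > EK (k+1) := by
  intro k hk hstop_k hkn
  obtain rfl : EB = nextSuccessValue p ES n := funext hEB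
  rw [mem_Icc] at hk
  have hbeats_k : nextSuccessValue p ES n k < ES k :=
    (nextSuccessValue_le hp hEKn hEK hk.2).trans_lt hstop_k
  have hbeats_later : ∀ r, k < r → r ≤ n → nextSuccessValue p ES n r < ES r := by
    intro r hkr
    induction r, hkr using Nat.le_induction with
    | base => exact fun _ => hyp k hk.1 hkn hbeats_k
    | succ r hkr ih => exact fun hrn => hyp r (by omega) (by omega) (ih (by omega))
  rw [eq_nextSuccessValue_of_forall_le hEKn hEK hkn fun r hr hrn =>
    (hbeats_later r (by omega) hrn).le]
  exact hbeats_later (k + 1) k.lt_succ_self hkn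

theorem stmt5 (n : ℕ) (hn : 1 ≤ n) (p w : ℕ → ℝ)
    (hp : ∀ i ∈ Icc 1 n, 0 ≤ p i ∧ p i ≤ 1)
    (hw : ∀ i ∈ Icc 1 n, 0 < w i)
    (ES EK EB : ℕ → ℝ)
    (hES : ∀ k, ES k = w k * ∏ i ∈ Icc (k+1) n, (1 - p i))
    (hEKn : EK n = 0)
    (hEK : ∀ k < n, EK k = p (k+1) * max (ES (k+1)) (EK (k+1))
        + (1 - p (k+1)) * EK (k+1))
    (hEB : ∀ k, EB k = ∑ i ∈ Icc (k+1) n,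
        (∏ j ∈ Icc (k+1) (i-1), (1 - p j)) * p i * ES i)
    (hyp : ∀ r, 0 < r → r < n → (ES r > EB r → ES (r+1) > EB (r+1))) :
    ∀ k ∈ Icc 1 n, ES k > EK k → k < n → ES (k+1) > EK (k+1) :=
  stmt5_general n p hp ES EK EB hEKn hEK hEB hyp
end

section
/- (Extended Odds-Theorem, threshold characterization) Suppose the problem is monotone, i.e., the set {k ∈ {1,...,n} : E_Stop(k) > E_Keep(k)} is nonempty and upward closed with minimum element k* (the optimal threshold), and suppose p_i < 1 for all k* ≤ i ≤ n. Setting w_0 := 0, one has k* = max{ k ∈ {1,...,n} : ∑_{j=k}^{n} w_j · p_j / (1 - p_j) ≥ w_{k-1} }. -/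
/-!
On the stopping region `[k*, n]` stopping beats continuing, so the continuation value
satisfies `EK k = p_{k+1} ES (k+1) + (1 - p_{k+1}) EK (k+1)` there, which unrolls to the
closed form `EK (k - 1) = (∏_{i=k}^n (1 - p_i)) · ∑_{j=k}^n w_j p_j / (1 - p_j)`.
Since also `ES (k - 1) = w_{k-1} ∏_{i=k}^n (1 - p_i)` and the product is positive,
`ES (k - 1) ≤ EK (k - 1)` is equivalent to `w_{k-1} ≤ ∑_{j=k}^n w_j p_j / (1 - p_j)`.
Minimality of `k*` gives this at `k = k* > 1` (at `k* = 1` it holds because `w_0 = 0`),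
and stopping at every `k - 1 ≥ k*` rules it out beyond `k*`.
-/

open Finset

section OddsTheorem

variable {n : ℕ} {p w ES EK : ℕ → ℝ}

theorem keep_eq_prod_mul_sum_of_stop_optimal
    (hES : ∀ k, ES k = w k * ∏ i ∈ Icc (k+1) n, (1 - p i))
    (hEKn : EK n = 0)
    (hEK : ∀ k < n, EK k = p (k+1) * max (ES (k+1)) (EK (k+1))
        + (1 - p (k+1)) * EK (k+1))
    {m : ℕ} (hm : m ≤ n) (hopt : ∀ i ∈ Ioc m n, p i ≠ 1 ∧ EK i ≤ ES i) :
    EK m = (∏ i ∈ Icc (m+1) n, (1 - p i)) * ∑ j ∈ Icc (m+1) n, w j * p j / (1 - p j) := by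
  induction hm using Nat.decreasingInduction with
  | self => simp [hEKn]
  | of_succ k hkn ih =>
    obtain ⟨hp1, hstop⟩ := hopt (k+1) (mem_Ioc.2 ⟨by omega, hkn⟩)
    have ih := ih fun i hi => hopt i (Ioc_subset_Ioc_left (by omega) hi)
    have hsplit : Icc (k+1) n = insert (k+1) (Icc (k+1+1) n) :=
      (insert_Icc_add_one_left_eq_Icc hkn).symm
    have hne : (1 : ℝ) - p (k+1) ≠ 0 := sub_ne_zero.2 (Ne.symm hp1)
    rw [hEK k hkn, max_eq_left hstop, ih, hES, hsplit, prod_insert (by simp),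
      sum_insert (by simp)]
    field_simp

theorem stop_le_keep_iff
    (hES : ∀ k, ES k = w k * ∏ i ∈ Icc (k+1) n, (1 - p i))
    (hEKn : EK n = 0)
    (hEK : ∀ k < n, EK k = p (k+1) * max (ES (k+1)) (EK (k+1))
        + (1 - p (k+1)) * EK (k+1))
    {m : ℕ} (hm : m ≤ n) (hopt : ∀ i ∈ Ioc m n, p i < 1 ∧ EK i < ES i) :
    ES m ≤ EK m ↔ w m ≤ ∑ j ∈ Icc (m+1) n, w j * p j / (1 - p j) := by
  have hprod : 0 < ∏ i ∈ Icc (m+1) n, (1 - p i) :=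
    prod_pos fun i hi => sub_pos.2 (hopt i (by rwa [← Icc_add_one_left_eq_Ioc])).1
  rw [hES, keep_eq_prod_mul_sum_of_stop_optimal hES hEKn hEK hm
    fun i hi => ⟨(hopt i hi).1.ne, (hopt i hi).2.le⟩, mul_comm, mul_le_mul_iff_right₀ hprod]

end OddsTheorem

theorem stmt8_general (n : ℕ) (p w : ℕ → ℝ)
    (hp : ∀ i ∈ Icc 1 n, 0 ≤ p i ∧ p i ≤ 1)
    (hw : ∀ i ∈ Icc 1 n, 0 < w i)
    (hw0 : w 0 = 0)
    (ES EK : ℕ → ℝ)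
    (hES : ∀ k, ES k = w k * ∏ i ∈ Icc (k+1) n, (1 - p i))
    (hEKn : EK n = 0)
    (hEK : ∀ k < n, EK k = p (k+1) * max (ES (k+1)) (EK (k+1))
        + (1 - p (k+1)) * EK (k+1))
    (kstar : ℕ)
    (hleast : IsLeast {k | k ∈ Icc 1 n ∧ ES k > EK k} kstar)
    (hup : ∀ k ∈ Icc 1 n, ES k > EK k → k < n → ES (k+1) > EK (k+1))
    (hp' : ∀ i, kstar ≤ i → i ≤ n → p i < 1) :
    IsGreatest {k | k ∈ Icc 1 n ∧ w (k-1) ≤ ∑ j ∈ Icc k n, w j * p j / (1 - p j)} kstar := by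
  obtain ⟨⟨hkstar, hstop⟩, hmin⟩ := hleast
  have hstop_tail : ∀ k, kstar ≤ k → k ≤ n → EK k < ES k := by
    intro k hk
    induction k, hk using Nat.le_induction with
    | base => exact fun _ => hstop
    | succ k hk ih =>
      exact fun hkn => hup k (mem_Icc.2 ⟨by grind, by omega⟩) (ih (by omega)) (by omega)
  have hopt : ∀ m, kstar ≤ m + 1 → ∀ i ∈ Ioc m n, p i < 1 ∧ EK i < ES i := fun m hm i hi =>
    ⟨hp' i (by grind) (mem_Ioc.1 hi).2, hstop_tail i (by grind) (mem_Ioc.1 hi).2⟩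
  have hiff : ∀ k, kstar ≤ k → k ≤ n →
      (ES (k-1) ≤ EK (k-1) ↔ w (k-1) ≤ ∑ j ∈ Icc k n, w j * p j / (1 - p j)) := fun k hk hkn => by
    have hk1 : 1 ≤ k := by grind
    simpa only [Nat.sub_add_cancel hk1] using
      stop_le_keep_iff hES hEKn hEK (by grind) (hopt (k-1) (by grind))
  refine ⟨⟨hkstar, ?_⟩, fun k ⟨hk, hsum⟩ => ?_⟩
  · rcases (mem_Icc.1 hkstar).1.eq_or_lt with hone | hgt_one
    · rw [← hone, Nat.sub_self, hw0]
      refine sum_nonneg fun j hj => div_nonneg (mul_nonneg (hw j hj).le (hp j hj).1) ?_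
      exact sub_nonneg.2 (hp' j (by grind) (mem_Icc.1 hj).2).le
    · refine (hiff kstar le_rfl (mem_Icc.1 hkstar).2).1 (not_lt.1 fun hgt => ?_)
      have := hmin ⟨mem_Icc.2 ⟨by omega, by grind⟩, hgt⟩
      omega
  · by_contra! hlt
    have hstop_prev := hstop_tail (k-1) (by omega) (by grind)
    exact ((hiff k hlt.le (mem_Icc.1 hk).2).2 hsum).not_gt hstop_prev

theorem stmt8 (n : ℕ) (hn : 1 ≤ n) (p w : ℕ → ℝ)
    (hp : ∀ i ∈ Icc 1 n, 0 ≤ p i ∧ p i ≤ 1)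
    (hw : ∀ i ∈ Icc 1 n, 0 < w i)
    (hw0 : w 0 = 0)
    (ES EK : ℕ → ℝ)
    (hES : ∀ k, ES k = w k * ∏ i ∈ Icc (k+1) n, (1 - p i))
    (hEKn : EK n = 0)
    (hEK : ∀ k < n, EK k = p (k+1) * max (ES (k+1)) (EK (k+1))
        + (1 - p (k+1)) * EK (k+1))
    (kstar : ℕ)
    (hleast : IsLeast {k | k ∈ Icc 1 n ∧ ES k > EK k} kstar)
    (hup : ∀ k ∈ Icc 1 n, ES k > EK k → k < n → ES (k+1) > EK (k+1))
    (hp' : ∀ i, kstar ≤ i → i ≤ n → p i < 1) :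
    IsGreatest {k | k ∈ Icc 1 n ∧ w (k-1) ≤ ∑ j ∈ Icc k n, w j * p j / (1 - p j)} kstar :=
  stmt8_general n p w hp hw hw0 ES EK hES hEKn hEK kstar hleast hup hp'
end

section
/- (Extended Odds-Theorem, value) Under the assumptions of monotonicity with optimal threshold s and p_i < 1 for all s ≤ i ≤ n, the optimal expected profit E_Keep(s-1) equals (∏_{j=s}^{n}(1 - p_j)) · ∑_{i=s}^{n} w_i · p_i / (1 - p_i). -/
open Finset

/-! Because the stopping set is upward closed, the `max` in the recursion for `EK` is `ES` from
`s` on, so `EK` solves a linear backward recurrence on `[s - 1, n]`; its solution sums, over the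
first success `i ≥ s`, the weight `(∏_{s ≤ j < i} (1 - p j)) * p i * ES i`. Together with the
product in `ES i` this weight telescopes to `∏_{j ∈ [s, n]} (1 - p j)` times `w i * p i / (1 - p i)`. -/

theorem eq_sum_of_backward_recurrence {R : Type*} [CommSemiring R] {x a c : ℕ → R} {m n : ℕ}
    (hmn : m ≤ n) (hx : x n = 0)
    (hrec : ∀ k, m ≤ k → k < n → x k = a (k + 1) + c (k + 1) * x (k + 1)) :
    x m = ∑ i ∈ Ioc m n, (∏ j ∈ Ioo m i, c j) * a i := by
  refine Nat.decreasingInduction' (P := fun k => x k = ∑ i ∈ Ioc k n, (∏ j ∈ Ioo k i, c j) * a i)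
    (fun k hkn hmk ih => ?_) hmn (by simp [hx])
  have hIoc : Ioc k n = insert (k + 1) (Ioc (k + 1) n) := by
    rw [Ioc_insert_left hkn, Icc_add_one_left_eq_Ioc]
  rw [hrec k hmk hkn, ih, hIoc, sum_insert left_notMem_Ioc, ← Ico_add_one_left_eq_Ioo, Ico_self,
    prod_empty, one_mul, mul_sum]
  congr 1
  refine sum_congr rfl fun i hi => ?_
  have hIoo : Ioo k i = insert (k + 1) (Ioo (k + 1) i) := by
    rw [Ioo_insert_left (mem_Ioc.mp hi).1, Ico_add_one_left_eq_Ioo]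
  rw [hIoo, prod_insert left_notMem_Ioo]
  ring

theorem prod_Ioc_eq_prod_Ioo_mul_mul_prod_Ioc {M : Type*} [CommMonoid M] (f : ℕ → M)
    {k i n : ℕ} (hki : k < i) (hin : i ≤ n) :
    ∏ j ∈ Ioc k n, f j = (∏ j ∈ Ioo k i, f j) * f i * ∏ j ∈ Ioc i n, f j := by
  rw [← prod_Ioc_consecutive f hki.le hin, ← Ioo_insert_right hki, prod_insert right_notMem_Ioo,
    mul_comm (f i)]

theorem Nat.bounded_le_induction {P : ℕ → Prop} {s n : ℕ} (hs : P s)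
    (hsucc : ∀ k, s ≤ k → k < n → P k → P (k + 1)) : ∀ i, s ≤ i → i ≤ n → P i := by
  intro i hsi
  induction i, hsi using Nat.le_induction with
  | base => exact fun _ => hs
  | succ k hsk ih => exact fun hkn => hsucc k hsk hkn (ih (Nat.le_of_succ_le hkn))

theorem stmt9_general (n : ℕ) (p w : ℕ → ℝ)
    (ES EK : ℕ → ℝ)
    (hES : ∀ k, ES k = w k * ∏ i ∈ Icc (k+1) n, (1 - p i))
    (hEKn : EK n = 0)
    (hEK : ∀ k < n, EK k = p (k+1) * max (ES (k+1)) (EK (k+1))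
        + (1 - p (k+1)) * EK (k+1))
    (s : ℕ)
    (hleast : IsLeast {k | k ∈ Icc 1 n ∧ ES k > EK k} s)
    (hup : ∀ k ∈ Icc 1 n, ES k > EK k → k < n → ES (k+1) > EK (k+1))
    (hp' : ∀ i, s ≤ i → i ≤ n → p i < 1) :
    EK (s-1) = (∏ j ∈ Icc s n, (1 - p j)) * ∑ i ∈ Icc s n, w i * p i / (1 - p i) := by
  obtain ⟨⟨hs, hstop⟩, -⟩ := hleast
  obtain ⟨hs1, hsn⟩ := mem_Icc.mp hs
  have hstopping : ∀ i, s ≤ i → i ≤ n → EK i < ES i :=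
    Nat.bounded_le_induction hstop fun k hsk hkn hk =>
      hup k (mem_Icc.mpr ⟨hs1.trans hsk, hkn.le⟩) hk hkn
  have hEK_sum :
      EK (s - 1) = ∑ i ∈ Ioc (s - 1) n, (∏ j ∈ Ioo (s - 1) i, (1 - p j)) * (p i * ES i) :=
    eq_sum_of_backward_recurrence (by omega) hEKn fun k hsk hkn => by
      rw [hEK k hkn, max_eq_left (hstopping (k + 1) (by omega) hkn).le]
  have hIcc : Icc s n = Ioc (s - 1) n := by rw [← Icc_add_one_left_eq_Ioc, Nat.sub_add_cancel hs1]
  rw [hEK_sum, hIcc, mul_sum]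
  refine sum_congr rfl fun i hi => ?_
  obtain ⟨hsi, hin⟩ := mem_Ioc.mp hi
  have hpi : 1 - p i ≠ 0 := (sub_pos.mpr (hp' i (by omega) hin)).ne'
  rw [hES, Icc_add_one_left_eq_Ioc, prod_Ioc_eq_prod_Ioo_mul_mul_prod_Ioc _ hsi hin]
  field_simp

theorem stmt9 (n : ℕ) (hn : 1 ≤ n) (p w : ℕ → ℝ)
    (hp : ∀ i ∈ Icc 1 n, 0 ≤ p i ∧ p i ≤ 1)
    (hw : ∀ i ∈ Icc 1 n, 0 < w i)
    (ES EK : ℕ → ℝ)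
    (hES : ∀ k, ES k = w k * ∏ i ∈ Icc (k+1) n, (1 - p i))
    (hEKn : EK n = 0)
    (hEK : ∀ k < n, EK k = p (k+1) * max (ES (k+1)) (EK (k+1))
        + (1 - p (k+1)) * EK (k+1))
    (s : ℕ)
    (hleast : IsLeast {k | k ∈ Icc 1 n ∧ ES k > EK k} s)
    (hup : ∀ k ∈ Icc 1 n, ES k > EK k → k < n → ES (k+1) > EK (k+1))
    (hp' : ∀ i, s ≤ i → i ≤ n → p i < 1) :
    EK (s-1) = (∏ j ∈ Icc s n, (1 - p j)) * ∑ i ∈ Icc s n, w i * p i / (1 - p i) :=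
  stmt9_general n p w ES EK hES hEKn hEK s hleast hup hp'
end

section
/- If the problem is monotone with optimal threshold k*, then E_Keep(r) = Ē_Keep(r) for all r ≥ k* - 1, and E_Keep(r) = Ē_Keep(k* - 1) for all r < k* - 1. -/
/-!
Above the threshold every stopping value beats the keep value, so the `max` in the recursion
for `E_Keep` always picks `E_Stop`; that is exactly the recursion satisfied by `Ē_Keep`, and both
vanish at `n`, so they agree on `[k* - 1, n]` by backward induction. Below the threshold the `max`
picks `E_Keep`, the recursion collapses to `E_Keep k = E_Keep (k + 1)`, and `E_Keep` is constant
on `[0, k* - 1]`.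
-/

open Finset

theorem sum_Icc_prod_Icc_pred_mul {R : Type*} [CommSemiring R] (q f : ℕ → R) {k n : ℕ}
    (hk : k < n) :
    ∑ i ∈ Icc (k + 1) n, (∏ j ∈ Icc (k + 1) (i - 1), q j) * f i =
      f (k + 1) + q (k + 1) *
        ∑ i ∈ Icc (k + 1 + 1) n, (∏ j ∈ Icc (k + 1 + 1) (i - 1), q j) * f i := by
  rw [Icc_eq_cons_Ioc (by omega), sum_cons, Icc_eq_empty (by omega), prod_empty, one_mul,
    ← Icc_add_one_left_eq_Ioc, mul_sum]
  congr 1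
  refine sum_congr rfl fun i hi => ?_
  rw [mem_Icc] at hi
  rw [Icc_eq_cons_Ioc (by omega : k + 1 ≤ i - 1), prod_cons, ← Icc_add_one_left_eq_Ioc]
  ring

section OptimalStopping

variable {p ES EK EB : ℕ → ℝ} {n : ℕ}

theorem keepBar_eq_zero
    (hEB : ∀ k, EB k = ∑ i ∈ Icc (k+1) n,
        (∏ j ∈ Icc (k+1) (i-1), (1 - p j)) * p i * ES i) :
    EB n = 0 := by
  rw [hEB n, Icc_eq_empty (by omega), sum_empty]

theorem keepBar_eq_of_lt
    (hEB : ∀ k, EB k = ∑ i ∈ Icc (k+1) n,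
        (∏ j ∈ Icc (k+1) (i-1), (1 - p j)) * p i * ES i)
    {k : ℕ} (hk : k < n) :
    EB k = p (k + 1) * ES (k + 1) + (1 - p (k + 1)) * EB (k + 1) := by
  simp only [hEB, mul_assoc]
  exact sum_Icc_prod_Icc_pred_mul (fun j => 1 - p j) (fun i => p i * ES i) hk

theorem keep_eq_keepBar_of_stop_gt (hEKn : EK n = 0)
    (hEK : ∀ k < n, EK k = p (k+1) * max (ES (k+1)) (EK (k+1)) + (1 - p (k+1)) * EK (k+1))
    (hEB : ∀ k, EB k = ∑ i ∈ Icc (k+1) n,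
        (∏ j ∈ Icc (k+1) (i-1), (1 - p j)) * p i * ES i)
    {m : ℕ} (hstop : ∀ k, m < k → k ≤ n → EK k < ES k) {r : ℕ} (hmr : m ≤ r)
    (hrn : r ≤ n) :
    EK r = EB r := by
  induction hrn using Nat.decreasingInduction with
  | self => rw [hEKn, keepBar_eq_zero hEB]
  | of_succ k hk ih =>
    rw [hEK k hk, max_eq_left (hstop (k + 1) (by omega) hk).le, keepBar_eq_of_lt hEB hk,
      ih (by omega)]

theorem keep_eq_of_stop_le
    (hEK : ∀ k < n, EK k = p (k+1) * max (ES (k+1)) (EK (k+1)) + (1 - p (k+1)) * EK (k+1))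
    {m : ℕ} (hmn : m ≤ n) (hkeep : ∀ k, 0 < k → k ≤ m → ES k ≤ EK k) {r : ℕ}
    (hrm : r ≤ m) :
    EK r = EK m := by
  induction hrm using Nat.decreasingInduction with
  | self => rfl
  | of_succ k hk ih =>
    rw [← ih, hEK k (by omega), max_eq_right (hkeep (k + 1) k.succ_pos hk)]
    ring

end OptimalStopping

theorem stmt10_general (n : ℕ) (p : ℕ → ℝ)
    (ES EK EB : ℕ → ℝ)
    (hEKn : EK n = 0)
    (hEK : ∀ k < n, EK k = p (k+1) * max (ES (k+1)) (EK (k+1))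
        + (1 - p (k+1)) * EK (k+1))
    (hEB : ∀ k, EB k = ∑ i ∈ Icc (k+1) n,
        (∏ j ∈ Icc (k+1) (i-1), (1 - p j)) * p i * ES i)
    (kstar : ℕ)
    (hleast : IsLeast {k | k ∈ Icc 1 n ∧ ES k > EK k} kstar)
    (hup : ∀ k ∈ Icc 1 n, ES k > EK k → k < n → ES (k+1) > EK (k+1)) :
    (∀ r, kstar - 1 ≤ r → r ≤ n → EK r = EB r) ∧
    (∀ r, r < kstar - 1 → EK r = EB (kstar - 1)) := by
  obtain ⟨⟨hkstar_mem, hkstar_stop⟩, hkstar_min⟩ := hleast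
  rw [mem_Icc] at hkstar_mem
  have hstop : ∀ k, kstar - 1 < k → k ≤ n → EK k < ES k := by
    intro k hk
    induction k, (by omega : kstar ≤ k) using Nat.le_induction with
    | base => exact fun _ => hkstar_stop
    | succ k hkk ih =>
      exact fun hkn =>
        hup k (mem_Icc.2 ⟨by omega, by omega⟩) (ih (by omega) (by omega)) (by omega)
  have hkeep : ∀ k, 0 < k → k ≤ kstar - 1 → ES k ≤ EK k := fun k hk0 hk =>
    not_lt.1 fun hlt => absurd (hkstar_min ⟨mem_Icc.2 ⟨hk0, by omega⟩, hlt⟩) (by omega)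
  have hagree : ∀ r, kstar - 1 ≤ r → r ≤ n → EK r = EB r := fun r hr hrn =>
    keep_eq_keepBar_of_stop_gt hEKn hEK hEB hstop hr hrn
  refine ⟨hagree, fun r hr => ?_⟩
  rw [keep_eq_of_stop_le hEK (by omega) hkeep hr.le, hagree _ le_rfl (by omega)]

theorem stmt10 (n : ℕ) (hn : 1 ≤ n) (p w : ℕ → ℝ)
    (hp : ∀ i ∈ Icc 1 n, 0 ≤ p i ∧ p i ≤ 1)
    (hw : ∀ i ∈ Icc 1 n, 0 < w i)
    (ES EK EB : ℕ → ℝ)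
    (hES : ∀ k, ES k = w k * ∏ i ∈ Icc (k+1) n, (1 - p i))
    (hEKn : EK n = 0)
    (hEK : ∀ k < n, EK k = p (k+1) * max (ES (k+1)) (EK (k+1))
        + (1 - p (k+1)) * EK (k+1))
    (hEB : ∀ k, EB k = ∑ i ∈ Icc (k+1) n,
        (∏ j ∈ Icc (k+1) (i-1), (1 - p j)) * p i * ES i)
    (kstar : ℕ)
    (hleast : IsLeast {k | k ∈ Icc 1 n ∧ ES k > EK k} kstar)
    (hup : ∀ k ∈ Icc 1 n, ES k > EK k → k < n → ES (k+1) > EK (k+1)) :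
    (∀ r, kstar - 1 ≤ r → r ≤ n → EK r = EB r) ∧
    (∀ r, r < kstar - 1 → EK r = EB (kstar - 1)) :=
  stmt10_general n p ES EK EB hEKn hEK hEB kstar hleast hup
end

section
/- (Odds-Theorem value as a special case) Take w_i = 1 for all i and suppose p_i < 1 for all i. With s = max{ k ∈ {1,...,n} : ∑_{j=k}^{n} p_j/(1-p_j) ≥ 1 } if ∑_{j=1}^{n} p_j/(1-p_j) ≥ 1 and s = 1 otherwise, the value of the strategy 'stop on the first success at index ≥ s' equals (∏_{j=s}^{n}(1-p_j)) · ∑_{i=s}^{n} p_i/(1-p_i), and this value equals Ē_Keep(s-1) = ∑_{i=s}^{n} (∏_{j=s}^{i-1}(1-p_j)) · p_i · ∏_{t=i+1}^{n}(1-p_t). -/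
/-!
Splitting `∏_{j=s}^{n} (1 - p_j)` at `i` shows that the `i`-th summand of `Ē_Keep(s-1)`, the
probability that `i` is the only success from `s` on, is this product times the odds
`p_i / (1 - p_i)`.
-/

open Finset

theorem Finset.prod_Icc_eq_prod_Ico_mul_mul_prod_Icc {M : Type*} [CommMonoid M] (f : ℕ → M)
    {s i n : ℕ} (hsi : s ≤ i) (hin : i ≤ n) :
    ∏ j ∈ Icc s n, f j = (∏ j ∈ Ico s i, f j) * f i * ∏ j ∈ Icc (i + 1) n, f j := by
  rw [← Ico_add_one_right_eq_Icc, ← Ico_add_one_right_eq_Icc,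
    ← prod_Ico_consecutive f (by omega : s ≤ i + 1) (by omega : i + 1 ≤ n + 1),
    prod_Ico_succ_top hsi]

theorem sum_prod_mul_prod_eq_prod_mul_sum_odds {K : Type*} [Field K] (p : ℕ → K) {s n : ℕ}
    (hs : 1 ≤ s) (hp : ∀ i ∈ Icc s n, p i ≠ 1) :
    ∑ i ∈ Icc s n, (∏ j ∈ Icc s (i - 1), (1 - p j)) * p i * ∏ t ∈ Icc (i + 1) n, (1 - p t) =
      (∏ j ∈ Icc s n, (1 - p j)) * ∑ i ∈ Icc s n, p i / (1 - p i) := by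
  rw [mul_sum]
  refine sum_congr rfl fun i hi => ?_
  obtain ⟨hsi, hin⟩ := mem_Icc.mp hi
  have hqi : 1 - p i ≠ 0 := sub_ne_zero.mpr (hp i hi).symm
  have hIcc : Icc s (i - 1) = Ico s i := by
    rw [← Ico_add_one_right_eq_Icc, Nat.sub_add_cancel (hs.trans hsi)]
  rw [hIcc, prod_Icc_eq_prod_Ico_mul_mul_prod_Icc _ hsi hin]
  field_simp

theorem stmt11_general (n : ℕ) (p : ℕ → ℝ)
    (hp : ∀ i ∈ Icc 1 n, 0 ≤ p i ∧ p i < 1)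
    (EB : ℕ → ℝ)
    (hEB : ∀ k, EB k = ∑ i ∈ Icc (k+1) n,
        (∏ j ∈ Icc (k+1) (i-1), (1 - p j)) * p i * ∏ t ∈ Icc (i+1) n, (1 - p t))
    (s : ℕ)
    (hs : if 1 ≤ ∑ j ∈ Icc 1 n, p j / (1 - p j) then
        IsGreatest {k | k ∈ Icc 1 n ∧ 1 ≤ ∑ j ∈ Icc k n, p j / (1 - p j)} s
      else s = 1) :
    EB (s-1) = (∏ j ∈ Icc s n, (1 - p j)) * ∑ i ∈ Icc s n, p i / (1 - p i) := by
  have hs1 : 1 ≤ s := by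
    split_ifs at hs
    · exact (mem_Icc.mp hs.1.1).1
    · exact hs.ge
  rw [hEB, Nat.sub_add_cancel hs1]
  refine sum_prod_mul_prod_eq_prod_mul_sum_odds p hs1 fun i hi => ?_
  have hi' : i ∈ Icc 1 n := mem_Icc.mpr ⟨hs1.trans (mem_Icc.mp hi).1, (mem_Icc.mp hi).2⟩
  exact (hp i hi').2.ne

theorem stmt11 (n : ℕ) (hn : 1 ≤ n) (p : ℕ → ℝ)
    (hp : ∀ i ∈ Icc 1 n, 0 ≤ p i ∧ p i < 1)
    (EB : ℕ → ℝ)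
    (hEB : ∀ k, EB k = ∑ i ∈ Icc (k+1) n,
        (∏ j ∈ Icc (k+1) (i-1), (1 - p j)) * p i * ∏ t ∈ Icc (i+1) n, (1 - p t))
    (s : ℕ)
    (hs : if 1 ≤ ∑ j ∈ Icc 1 n, p j / (1 - p j) then
        IsGreatest {k | k ∈ Icc 1 n ∧ 1 ≤ ∑ j ∈ Icc k n, p j / (1 - p j)} s
      else s = 1) :
    EB (s-1) = (∏ j ∈ Icc s n, (1 - p j)) * ∑ i ∈ Icc s n, p i / (1 - p i) :=
  stmt11_general n p hp EB hEB s hs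
end

section
/- (Best-choice Minimal Duration asymptotics) Let s_n := max{ k ∈ {2,...,n} : ∑_{i=k-2}^{n-1} 1/i ≥ 2k - n - 2 } (with the convention that indices below 1 are omitted from the sum). Then s_n / n → 1/2 as n → ∞. -/
/-!
Every `k ≤ (n + 2) / 2` satisfies the defining inequality, since its left side is then nonpositive;
conversely the right side is at most the harmonic number `H_n ≤ 1 + log n`. Hence
`n / 2 ≤ s_n ≤ (n + 3 + log n) / 2`, and `log n / n → 0`.
-/

open Finset Filter

def IsMinDurationCandidate (n k : ℕ) : Prop :=
  2 ≤ k ∧ k ≤ n ∧ (2 * (k : ℝ) - n - 2) ≤ ∑ i ∈ Icc (max (k-2) 1) (n-1), (1 : ℝ) / i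

lemma sum_one_div_le_one_add_log {t : Finset ℕ} {b : ℕ} (ht : t ⊆ Icc 1 b) :
    ∑ i ∈ t, (1 : ℝ) / i ≤ 1 + Real.log b :=
  calc ∑ i ∈ t, (1 : ℝ) / i
      ≤ ∑ i ∈ Icc 1 b, (1 : ℝ) / i :=
        sum_le_sum_of_subset_of_nonneg ht fun _ _ _ => by positivity
    _ = harmonic b := by simp [harmonic_eq_sum_Icc]
    _ ≤ 1 + Real.log b := harmonic_le_one_add_log b

lemma isMinDurationCandidate_of_two_mul_le {n k : ℕ} (h2k : 2 ≤ k) (hkn : k ≤ n)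
    (hk : 2 * k ≤ n + 2) : IsMinDurationCandidate n k := by
  refine ⟨h2k, hkn, le_trans ?_ (sum_nonneg fun i _ => by positivity)⟩
  have : (2 * k : ℝ) ≤ n + 2 := by exact_mod_cast hk
  linarith

lemma IsMinDurationCandidate.le_half_add_log {n k : ℕ} (hk : IsMinDurationCandidate n k) :
    (k : ℝ) ≤ (n + 3 + Real.log n) / 2 := by
  obtain ⟨-, -, hsum⟩ := hk
  have hsub : Icc (max (k - 2) 1) (n - 1) ⊆ Icc 1 n :=
    Icc_subset_Icc (le_max_right _ _) (Nat.sub_le n 1)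
  linarith [sum_one_div_le_one_add_log hsub]

lemma half_le_of_isGreatest {n m : ℕ} (hn : 2 ≤ n)
    (hm : IsGreatest {k | IsMinDurationCandidate n k} m) : (n : ℝ) / 2 ≤ m := by
  have hle : (n + 2) / 2 ≤ m :=
    hm.2 (isMinDurationCandidate_of_two_mul_le (by omega) (by omega) (by omega))
  have : (n : ℝ) + 1 ≤ 2 * m := by exact_mod_cast (by omega : n + 1 ≤ 2 * m)
  linarith

lemma tendsto_half_add_log_div :
    Tendsto (fun n : ℕ => ((n + 3 + Real.log n) / 2) / n) atTop (nhds (1 / 2)) := by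
  have hlog : Tendsto (fun n : ℕ => Real.log n / n) atTop (nhds 0) :=
    Real.isLittleO_log_id_atTop.tendsto_div_nhds_zero.comp tendsto_natCast_atTop_atTop
  have hinv : Tendsto (fun n : ℕ => 3 / (n : ℝ)) atTop (nhds 0) :=
    tendsto_const_nhds.div_atTop tendsto_natCast_atTop_atTop
  have hsum := ((hinv.add hlog).div_const 2).const_add (1 / 2 : ℝ)
  rw [add_zero, zero_div, add_zero] at hsum
  refine hsum.congr' ?_
  filter_upwards [eventually_ne_atTop 0] with n hn
  field_simp
  ring

theorem stmt13 (s : ℕ → ℕ)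
    (hs : ∀ n, 2 ≤ n → IsGreatest {k : ℕ | 2 ≤ k ∧ k ≤ n ∧
        (2 * (k : ℝ) - n - 2) ≤ ∑ i ∈ Icc (max (k-2) 1) (n-1), (1 : ℝ) / i} (s n)) :
    Tendsto (fun n : ℕ => (s n : ℝ) / n) atTop (nhds (1/2)) := by
  refine tendsto_of_tendsto_of_tendsto_of_le_of_le' tendsto_const_nhds tendsto_half_add_log_div
    ?_ ?_ <;> filter_upwards [eventually_ge_atTop 2] with n hn
  · rw [le_div_iff₀ (by positivity)]
    linarith [half_le_of_isGreatest hn (hs n hn)]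
  · exact div_le_div_of_nonneg_right
      (IsMinDurationCandidate.le_half_add_log (hs n hn).1) n.cast_nonneg
end
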